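/- Let P = {x : ⟪x,s⟫ = t} and Q = {x : ⟪x,s'⟫ = u} be two hyperplanes each meeting the open unit ball of ℝ^{n+1} (|t| < 1, |u| < 1) with non-parallel unit normals s' ≠ ±s. If additionally the affine (n−1)-dimensional subspace P ∩ Q meets the open unit ball, then the complement of P ∪ Q in the unit sphere S^n (n ≥ 2) has exactly 4 connected components; if P ∩ Q is disjoint from the closed unit ball, the complement S^n \ (P ∪ Q) has exactly 3 connected components. -/

import Mathlib

/-!
The four open wedges `wedge σ`, each the intersection of a side of `P` with a side of `Q`,
partition the complement of `P ∪ Q`, so the components of `S^n \ (P ∪ Q)` are the nonempty sets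
`wedge σ ∩ S^n` once these are shown connected. Every point of `wedge σ ∩ S^n` can be joined to a
fixed point `p` of it lying in the plane `K = span {s, s'}`: move its `K`-component linearly to
`p` inside the convex set `wedge σ ∩ K ∩ closedBall 0 1`, and add the multiple of a unit vector of
`Kᗮ` (nonzero as `n ≥ 2`) that keeps it on the sphere. Such a `p` exists as soon as `wedge σ`
meets the closed ball: push along a direction of `K` that increases both defining functionals.

A point of `P ∩ Q` in the open ball lies in the closure of all four wedges. If `P ∩ Q` misses the
closed ball, its point `x₀ ∈ K` has `‖x₀‖ > 1`, so `⟪x₀, x⟫ < ‖x₀‖ ^ 2` on the closed ball; this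
separates exactly one wedge from the ball, while `u • s' ∈ Q` and `t • s ∈ P`, which lie in the
open ball, are in the closure of the other three.
-/

open scoped InnerProductSpace

open Set Metric Submodule Filter

theorem Continuous.card_connectedComponents_eq_card_range {X ι : Type*} [TopologicalSpace X]
    [TopologicalSpace ι] [DiscreteTopology ι] {f : X → ι} (hf : Continuous f)
    (hfib : ∀ i, IsPreconnected (f ⁻¹' {i})) :
    Nat.card (ConnectedComponents X) = Nat.card (range f) := by
  have hinj : Function.Injective hf.connectedComponentsLift := by
    refine ConnectedComponents.surjective_coe.forall₂.mpr fun x y (hxy : f x = f y) => ?_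
    exact ConnectedComponents.coe_eq_coe'.mpr <|
      (hfib (f y)).subset_connectedComponent rfl hxy
  rw [← Nat.card_range_of_injective hinj, ← ConnectedComponents.surjective_coe.range_comp]
  rfl

variable {E : Type*} [NormedAddCommGroup E] [InnerProductSpace ℝ E]

theorem Submodule.exists_norm_eq_one_smul_eq {L : Submodule ℝ E} (hL : L ≠ ⊥) {z : E}
    (hz : z ∈ L) : ∃ ζ ∈ L, ‖ζ‖ = 1 ∧ z = ‖z‖ • ζ := by
  rcases eq_or_ne z 0 with rfl | hz0
  · obtain ⟨w, hwL, hw0⟩ := L.ne_bot_iff.mp hL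
    exact ⟨‖w‖⁻¹ • w, L.smul_mem _ hwL, norm_smul_inv_norm hw0, by simp⟩
  · refine ⟨‖z‖⁻¹ • z, L.smul_mem _ hz, norm_smul_inv_norm hz0, ?_⟩
    rw [smul_smul, mul_inv_cancel₀ (norm_ne_zero_iff.mpr hz0), one_smul]

theorem norm_add_smul_sqrt_eq_one {K : Submodule ℝ E} {a ζ : E} (ha : a ∈ K) (hζ : ζ ∈ Kᗮ)
    (hζ1 : ‖ζ‖ = 1) (ha1 : ‖a‖ ≤ 1) : ‖a + √(1 - ‖a‖ ^ 2) • ζ‖ = 1 := by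
  have horth : ⟪a, √(1 - ‖a‖ ^ 2) • ζ⟫_ℝ = 0 :=
    K.inner_right_of_mem_orthogonal ha (Kᗮ.smul_mem _ hζ)
  have hsq : ‖a + √(1 - ‖a‖ ^ 2) • ζ‖ ^ 2 = 1 := by
    rw [sq, norm_add_sq_eq_norm_sq_add_norm_sq_real horth, norm_smul, hζ1, mul_one,
      Real.norm_of_nonneg (Real.sqrt_nonneg _), Real.mul_self_sqrt (by nlinarith [norm_nonneg a])]
    ring
  exact (pow_eq_one_iff_of_nonneg (norm_nonneg _) two_ne_zero).mp hsq

theorem isPathConnected_sphere_inter_preimage_starProjection (K : Submodule ℝ E)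
    [K.HasOrthogonalProjection] (hK : Kᗮ ≠ ⊥) {C : Set E} (hC : Convex ℝ C)
    {p : E} (hpK : p ∈ K) (hpC : p ∈ C) (hp : ‖p‖ = 1) :
    IsPathConnected (sphere (0 : E) 1 ∩ K.starProjection ⁻¹' C) := by
  set D := C ∩ K ∩ closedBall (0 : E) 1
  have hpD : p ∈ D := ⟨⟨hpC, hpK⟩, by simp [hp]⟩
  have hD : IsPathConnected D :=
    ((hC.inter K.convex).inter (convex_closedBall 0 1)).isPathConnected ⟨p, hpD⟩
  set lift : E → E → E := fun ζ a => a + √(1 - ‖a‖ ^ 2) • ζ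
  have lift_p (ζ : E) : lift ζ p = p := by simp [lift, hp]
  have lift_mapsTo {ζ : E} (hζK : ζ ∈ Kᗮ) (hζ : ‖ζ‖ = 1) :
      lift ζ '' D ⊆ sphere 0 1 ∩ K.starProjection ⁻¹' C := by
    rintro _ ⟨a, ⟨⟨haC, haK⟩, ha⟩, rfl⟩
    refine ⟨by simpa using norm_add_smul_sqrt_eq_one haK hζK hζ (by simpa using ha), ?_⟩
    simpa [lift, K.starProjection_eq_self_iff.mpr haK,
      K.starProjection_apply_eq_zero_iff.mpr hζK] using haC
  refine ⟨p, ⟨by simpa using hp, by simpa [K.starProjection_eq_self_iff.mpr hpK]⟩,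
    fun x hx => ?_⟩
  have hx1 : ‖x‖ = 1 := by simpa using hx.1
  obtain ⟨ζ, hζK, hζ, hxζ⟩ :=
    Submodule.exists_norm_eq_one_smul_eq hK (K.sub_starProjection_mem_orthogonal x)
  have hPx : K.starProjection x ∈ D :=
    ⟨⟨hx.2, K.starProjection_apply_mem x⟩,
      by simpa [hx1] using K.norm_starProjection_apply_le x⟩
  have hlift : lift ζ (K.starProjection x) = x := by
    have hpyth := K.norm_sq_eq_add_norm_sq_starProjection x
    rw [K.starProjection_orthogonal_val, hx1] at hpyth
    have : √(1 - ‖K.starProjection x‖ ^ 2) = ‖x - K.starProjection x‖ := by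
      rw [show 1 - ‖K.starProjection x‖ ^ 2 = ‖x - K.starProjection x‖ ^ 2 by linarith,
        Real.sqrt_sq (norm_nonneg _)]
    simp only [lift, this, ← hxζ, add_sub_cancel]
  have hJ := (hD.image (f := lift ζ) (by fun_prop)).joinedIn _ ⟨p, hpD, rfl⟩ _ ⟨_, hPx, hlift⟩
  rw [lift_p] at hJ
  exact hJ.mono (lift_mapsTo hζK hζ)

theorem orthogonal_span_pair_ne_bot [FiniteDimensional ℝ E] (hE : 3 ≤ Module.finrank ℝ E)
    (s s' : E) : (span ℝ {s, s'})ᗮ ≠ ⊥ := by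
  rw [Ne, orthogonal_eq_bot_iff]
  intro htop
  classical
  have h := finrank_span_le_card (R := ℝ) ({s, s'} : Set E)
  rw [htop, finrank_top] at h
  have : ({s, s'} : Set E).toFinset.card ≤ 2 := by
    rw [Set.toFinset_insert, Set.toFinset_singleton]; exact Finset.card_le_two
  omega

theorem abs_real_inner_lt_one {s s' : E} (hs : ‖s‖ = 1) (hs' : ‖s'‖ = 1) (h : s' ≠ s)
    (h' : s' ≠ -s) : |⟪s, s'⟫_ℝ| < 1 := by
  refine abs_lt.mpr ⟨lt_of_le_of_ne (neg_one_le_real_inner_of_norm_eq_one hs hs') ?_,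
    (inner_lt_one_iff_real_of_norm_eq_one hs hs').mpr h.symm⟩
  rw [ne_comm, Ne, inner_eq_neg_one_iff_of_norm_eq_one hs hs']
  exact fun h'' => h' (by rw [h'', neg_neg])

theorem exists_mem_span_inner_eq {s s' : E} (hs : ‖s‖ = 1) (hs' : ‖s'‖ = 1)
    (hc : |⟪s, s'⟫_ℝ| < 1) (a b : ℝ) :
    ∃ v ∈ span ℝ {s, s'}, ⟪v, s⟫_ℝ = a ∧ ⟪v, s'⟫_ℝ = b := by
  have hdet : 1 - ⟪s, s'⟫_ℝ ^ 2 ≠ 0 := by nlinarith [abs_lt.mp hc, sq_abs ⟪s, s'⟫_ℝ]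
  refine ⟨((a - ⟪s, s'⟫_ℝ * b) / (1 - ⟪s, s'⟫_ℝ ^ 2)) • s +
    ((b - ⟪s, s'⟫_ℝ * a) / (1 - ⟪s, s'⟫_ℝ ^ 2)) • s',
    mem_span_pair.mpr ⟨_, _, rfl⟩, ?_, ?_⟩ <;>
  · simp only [inner_add_left, real_inner_smul_left, real_inner_self_eq_norm_sq, hs, hs',
      real_inner_comm s s']
    field_simp
    ring

theorem exists_nonneg_norm_add_smul_eq_one {a v : E} (ha : ‖a‖ ≤ 1) (hv : v ≠ 0) :
    ∃ τ : ℝ, 0 ≤ τ ∧ ‖a + τ • v‖ = 1 := by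
  have hlow (τ : ℝ) (hτ : 0 ≤ τ) : τ * ‖v‖ - ‖a‖ ≤ ‖a + τ • v‖ := by
    have := norm_sub_le (a + τ • v) a
    rw [add_sub_cancel_left, norm_smul, Real.norm_of_nonneg hτ] at this
    linarith
  have htop : Tendsto (fun τ : ℝ => ‖a + τ • v‖) atTop atTop :=
    tendsto_atTop_mono' _ ((eventually_ge_atTop 0).mono hlow) <|
      tendsto_atTop_add_const_right _ _ <|
        tendsto_id.atTop_mul_const (norm_pos_iff.mpr hv)
  exact intermediate_value_Ici (a := (0 : ℝ)) (by fun_prop) htop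
    (show (1 : ℝ) ∈ Ici ‖a + (0 : ℝ) • v‖ by simpa using ha)

noncomputable def boolSign (b : Bool) : ℝ := if b then 1 else -1

theorem boolSign_mul_self (b : Bool) : boolSign b * boolSign b = 1 := by
  cases b <;> norm_num [boolSign]

theorem boolSign_mul_mul_boolSign_mul (b : Bool) (r w : ℝ) :
    boolSign b * r * (boolSign b * w) = r * w := by
  linear_combination r * w * boolSign_mul_self b

theorem boolSign_mul_pos_iff {r : ℝ} (hr : r ≠ 0) {b : Bool} :
    0 < boolSign b * r ↔ b = decide (0 < r) := by
  rcases hr.lt_or_gt with h | h <;> cases b <;> simp [boolSign, h, not_lt.mpr h.le]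

theorem boolSign_mul_neg_of_ne {r : ℝ} (hr : r ≠ 0) {b : Bool} (hb : b ≠ decide (0 < r)) :
    boolSign b * r < 0 := by
  rcases hr.lt_or_gt with h | h <;> cases b <;> simp_all [boolSign]

theorem boolSign_mul_inner_add_smul_sub {s x v : E} {b : Bool} (hv : ⟪v, s⟫_ℝ = boolSign b)
    (τ t : ℝ) : boolSign b * (⟪x + τ • v, s⟫_ℝ - t) = boolSign b * (⟪x, s⟫_ℝ - t) + τ := by
  rw [inner_add_left, real_inner_smul_left, hv]
  linear_combination τ * boolSign_mul_self b

theorem convex_setOf_pos_mul_inner_sub (s : E) (c t : ℝ) :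
    Convex ℝ {x : E | 0 < c * (⟪x, s⟫_ℝ - t)} := by
  intro x hx y hy a b ha hb hab
  simp only [mem_ofPred_eq, inner_add_left, real_inner_smul_left] at hx hy ⊢
  have hsplit : c * (a * ⟪x, s⟫_ℝ + b * ⟪y, s⟫_ℝ - t) =
      a * (c * (⟪x, s⟫_ℝ - t)) + b * (c * (⟪y, s⟫_ℝ - t)) := by
    linear_combination c * t * hab
  rw [hsplit]
  rcases ha.eq_or_lt with rfl | ha
  · simp_all
  · nlinarith [mul_pos ha hx, mul_nonneg hb hy.le]

section Wedge

variable (s : E) (t : ℝ) (s' : E) (u : ℝ)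

noncomputable def wedge (σ : Bool × Bool) : Set E :=
  {x | 0 < boolSign σ.1 * (⟪x, s⟫_ℝ - t) ∧ 0 < boolSign σ.2 * (⟪x, s'⟫_ℝ - u)}

noncomputable def sides (x : E) : Bool × Bool :=
  (decide (0 < ⟪x, s⟫_ℝ - t), decide (0 < ⟪x, s'⟫_ℝ - u))

variable {s t s' u}

theorem isOpen_wedge (σ : Bool × Bool) : IsOpen (wedge s t s' u σ) := by
  rw [wedge, ofPred_and]
  exact (isOpen_lt continuous_const (by fun_prop)).inter (isOpen_lt continuous_const (by fun_prop))

theorem convex_wedge (σ : Bool × Bool) : Convex ℝ (wedge s t s' u σ) := by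
  rw [wedge, ofPred_and]
  exact (convex_setOf_pos_mul_inner_sub _ _ _).inter (convex_setOf_pos_mul_inner_sub _ _ _)

theorem ne_of_mem_wedge {σ : Bool × Bool} {x : E} (hx : x ∈ wedge s t s' u σ) :
    ⟪x, s⟫_ℝ ≠ t ∧ ⟪x, s'⟫_ℝ ≠ u :=
  ⟨fun h => hx.1.ne' (by rw [h, sub_self, mul_zero]),
    fun h => hx.2.ne' (by rw [h, sub_self, mul_zero])⟩

theorem sides_eq_iff_mem_wedge {x : E} (hx : ⟪x, s⟫_ℝ ≠ t) (hx' : ⟪x, s'⟫_ℝ ≠ u)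
    {σ : Bool × Bool} : sides s t s' u x = σ ↔ x ∈ wedge s t s' u σ := by
  rw [wedge, mem_ofPred_eq, boolSign_mul_pos_iff (sub_ne_zero.mpr hx),
    boolSign_mul_pos_iff (sub_ne_zero.mpr hx'), Prod.ext_iff, sides, eq_comm, @eq_comm _ σ.2]

theorem starProjection_preimage_wedge (K : Submodule ℝ E) [K.HasOrthogonalProjection]
    (hsK : s ∈ K) (hs'K : s' ∈ K) (σ : Bool × Bool) :
    K.starProjection ⁻¹' wedge s t s' u σ = wedge s t s' u σ := by
  ext x
  simp only [wedge, mem_preimage, mem_ofPred_eq, K.inner_starProjection_left_eq_right,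
    K.starProjection_eq_self_iff.mpr hsK, K.starProjection_eq_self_iff.mpr hs'K]

theorem exists_mem_wedge_norm_eq_one (hs : ‖s‖ = 1) (hs' : ‖s'‖ = 1) (hc : |⟪s, s'⟫_ℝ| < 1)
    {K : Submodule ℝ E} (hsK : s ∈ K) (hs'K : s' ∈ K) {σ : Bool × Bool} {x : E} (hxK : x ∈ K)
    (hx : x ∈ wedge s t s' u σ) (hx1 : ‖x‖ ≤ 1) :
    ∃ p ∈ K, p ∈ wedge s t s' u σ ∧ ‖p‖ = 1 := by
  obtain ⟨v, hvK, hvs, hvs'⟩ := exists_mem_span_inner_eq hs hs' hc (boolSign σ.1) (boolSign σ.2)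
  have hv0 : v ≠ 0 := by
    rintro rfl
    have := boolSign_mul_self σ.1
    rw [← hvs, inner_zero_left, zero_mul] at this
    exact zero_ne_one this
  obtain ⟨τ, hτ, hτ1⟩ := exists_nonneg_norm_add_smul_eq_one hx1 hv0
  refine ⟨_, K.add_mem hxK (K.smul_mem τ (span_le.mpr (pair_subset hsK hs'K) hvK)),
    ⟨?_, ?_⟩, hτ1⟩
  · rw [boolSign_mul_inner_add_smul_sub hvs]; linarith [hx.1]
  · rw [boolSign_mul_inner_add_smul_sub hvs']; linarith [hx.2]

theorem mem_closure_wedge (hs : ‖s‖ = 1) (hs' : ‖s'‖ = 1) (hc : |⟪s, s'⟫_ℝ| < 1)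
    {σ : Bool × Bool} {y : E} (hy : 0 ≤ boolSign σ.1 * (⟪y, s⟫_ℝ - t))
    (hy' : 0 ≤ boolSign σ.2 * (⟪y, s'⟫_ℝ - u)) : y ∈ closure (wedge s t s' u σ) := by
  obtain ⟨v, -, hvs, hvs'⟩ := exists_mem_span_inner_eq hs hs' hc (boolSign σ.1) (boolSign σ.2)
  have hlim : Tendsto (fun τ : ℝ => y + τ • v) (nhdsWithin 0 (Ioi 0)) (nhds y) := by
    refine tendsto_nhdsWithin_of_tendsto_nhds ?_
    exact (by fun_prop : Continuous fun τ : ℝ => y + τ • v).tendsto' 0 y (by simp)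
  refine mem_closure_of_tendsto hlim (eventually_nhdsWithin_of_forall fun τ (hτ : 0 < τ) => ?_)
  exact ⟨by rw [boolSign_mul_inner_add_smul_sub hvs]; linarith,
    by rw [boolSign_mul_inner_add_smul_sub hvs']; linarith⟩

theorem wedge_inter_sphere_nonempty_iff (hs : ‖s‖ = 1) (hs' : ‖s'‖ = 1)
    (hc : |⟪s, s'⟫_ℝ| < 1) (σ : Bool × Bool) :
    (wedge s t s' u σ ∩ sphere 0 1).Nonempty ↔ (wedge s t s' u σ ∩ closedBall 0 1).Nonempty := by
  refine ⟨fun h => h.mono (inter_subset_inter_right _ sphere_subset_closedBall), ?_⟩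
  rintro ⟨x, hxW, hx⟩
  obtain ⟨p, -, hpW, hp⟩ := exists_mem_wedge_norm_eq_one hs hs' hc (mem_top (x := s))
    mem_top (mem_top (x := x)) hxW (mem_closedBall_zero_iff.mp hx)
  exact ⟨p, hpW, mem_sphere_zero_iff_norm.mpr hp⟩

theorem isPreconnected_wedge_inter_sphere (hs : ‖s‖ = 1) (hs' : ‖s'‖ = 1)
    (hc : |⟪s, s'⟫_ℝ| < 1) (K : Submodule ℝ E) [K.HasOrthogonalProjection] (hK : Kᗮ ≠ ⊥)
    (hsK : s ∈ K) (hs'K : s' ∈ K) (σ : Bool × Bool) :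
    IsPreconnected (wedge s t s' u σ ∩ sphere 0 1) := by
  rcases (wedge s t s' u σ ∩ sphere (0 : E) 1).eq_empty_or_nonempty with h | ⟨x, hxW, hx⟩
  · rw [h]
    exact isPreconnected_empty
  have hPx : K.starProjection x ∈ wedge s t s' u σ := by
    rwa [← mem_preimage, starProjection_preimage_wedge K hsK hs'K]
  obtain ⟨p, hpK, hpW, hp⟩ := exists_mem_wedge_norm_eq_one hs hs' hc hsK hs'K
    (K.starProjection_apply_mem x) hPx
    ((K.norm_starProjection_apply_le x).trans (mem_sphere_zero_iff_norm.mp hx).le)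
  rw [inter_comm, ← starProjection_preimage_wedge K hsK hs'K σ]
  exact (isPathConnected_sphere_inter_preimage_starProjection K hK (convex_wedge σ) hpK hpW
    hp).isConnected.isPreconnected

theorem card_connectedComponents_sphere_diff_eq [FiniteDimensional ℝ E]
    (hE : 3 ≤ Module.finrank ℝ E) (hs : ‖s‖ = 1) (hs' : ‖s'‖ = 1) (hc : |⟪s, s'⟫_ℝ| < 1) :
    Nat.card (ConnectedComponents
        {v : sphere (0 : E) 1 // ⟪(v : E), s⟫_ℝ ≠ t ∧ ⟪(v : E), s'⟫_ℝ ≠ u}) =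
      Nat.card {σ : Bool × Bool // (wedge s t s' u σ ∩ closedBall 0 1).Nonempty} := by
  let ι : {v : sphere (0 : E) 1 // ⟪(v : E), s⟫_ℝ ≠ t ∧ ⟪(v : E), s'⟫_ℝ ≠ u} → E :=
    fun v => v.1
  have hι : Topology.IsInducing ι :=
    Topology.IsInducing.subtypeVal.comp Topology.IsInducing.subtypeVal
  have hfib (σ : Bool × Bool) : (sides s t s' u ∘ ι) ⁻¹' {σ} = ι ⁻¹' wedge s t s' u σ :=
    ext fun v => sides_eq_iff_mem_wedge v.2.1 v.2.2
  have himage (σ : Bool × Bool) :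
      ι '' (ι ⁻¹' wedge s t s' u σ) = wedge s t s' u σ ∩ sphere 0 1 := by
    rw [image_preimage_eq_inter_range]
    refine subset_antisymm (inter_subset_inter_right _ ?_)
      fun x ⟨hxW, hx⟩ => ⟨hxW, ⟨⟨x, hx⟩, ne_of_mem_wedge hxW⟩, rfl⟩
    rintro _ ⟨v, rfl⟩
    exact v.1.2
  have hcont : Continuous (sides s t s' u ∘ ι) := continuous_discrete_rng.mpr fun σ =>
    hfib σ ▸ (isOpen_wedge σ).preimage hι.continuous
  have hpre (σ : Bool × Bool) : IsPreconnected ((sides s t s' u ∘ ι) ⁻¹' {σ}) := by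
    rw [hfib, ← hι.isPreconnected_image, himage]
    exact isPreconnected_wedge_inter_sphere hs hs' hc _ (orthogonal_span_pair_ne_bot hE s s')
      (subset_span (by simp)) (subset_span (by simp)) σ
  rw [hcont.card_connectedComponents_eq_card_range hpre]
  refine Nat.card_congr (Equiv.subtypeEquivRight fun σ => ?_)
  rw [← preimage_singleton_nonempty, hfib, ← image_nonempty, himage,
    wedge_inter_sphere_nonempty_iff hs hs' hc]

theorem wedge_inter_ball_nonempty_of_nonneg (hs : ‖s‖ = 1) (hs' : ‖s'‖ = 1)
    (hc : |⟪s, s'⟫_ℝ| < 1) {σ : Bool × Bool} {y : E} (hy : 0 ≤ boolSign σ.1 * (⟪y, s⟫_ℝ - t))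
    (hy' : 0 ≤ boolSign σ.2 * (⟪y, s'⟫_ℝ - u)) (hy1 : ‖y‖ < 1) :
    (wedge s t s' u σ ∩ ball 0 1).Nonempty := by
  rw [inter_comm]
  exact mem_closure_iff.mp (mem_closure_wedge hs hs' hc hy hy') _ isOpen_ball
    (mem_ball_zero_iff.mpr hy1)

theorem exists_forall_mem_closedBall_mul_add_mul_neg (hs : ‖s‖ = 1) (hs' : ‖s'‖ = 1)
    (hc : |⟪s, s'⟫_ℝ| < 1)
    (hPQ : {x : E | ⟪x, s⟫_ℝ = t} ∩ {x | ⟪x, s'⟫_ℝ = u} ∩ closedBall 0 1 = ∅) :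
    ∃ p q : ℝ, ∀ x ∈ closedBall (0 : E) 1, p * (⟪x, s⟫_ℝ - t) + q * (⟪x, s'⟫_ℝ - u) < 0 := by
  obtain ⟨x₀, hx₀K, hx₀s, hx₀s'⟩ := exists_mem_span_inner_eq hs hs' hc t u
  obtain ⟨p, q, hx₀⟩ := mem_span_pair.mp hx₀K
  have hfar : 1 < ‖x₀‖ := not_le.mp fun h =>
    hPQ.subset ⟨⟨hx₀s, hx₀s'⟩, mem_closedBall_zero_iff.mpr h⟩
  have hx₀x (x : E) : ⟪x₀, x⟫_ℝ = p * ⟪x, s⟫_ℝ + q * ⟪x, s'⟫_ℝ := by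
    rw [← hx₀, inner_add_left, real_inner_smul_left, real_inner_smul_left,
      real_inner_comm x, real_inner_comm x]
  have hx₀x₀ : ‖x₀‖ ^ 2 = p * t + q * u := by
    rw [← real_inner_self_eq_norm_sq, hx₀x, hx₀s, hx₀s']
  refine ⟨p, q, fun x hx => ?_⟩
  have hle : ⟪x₀, x⟫_ℝ ≤ ‖x₀‖ := (real_inner_le_norm _ _).trans
    (mul_le_of_le_one_right (norm_nonneg _) (mem_closedBall_zero_iff.mp hx))
  nlinarith [hx₀x x]

theorem exists_forall_wedge_inter_closedBall_nonempty_iff_ne (hs : ‖s‖ = 1) (hs' : ‖s'‖ = 1)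
    (hc : |⟪s, s'⟫_ℝ| < 1) (ht : |t| < 1) (hu : |u| < 1)
    (hPQ : {x : E | ⟪x, s⟫_ℝ = t} ∩ {x | ⟪x, s'⟫_ℝ = u} ∩ closedBall 0 1 = ∅) :
    ∃ σ₀, ∀ σ, (wedge s t s' u σ ∩ closedBall 0 1).Nonempty ↔ σ ≠ σ₀ := by
  obtain ⟨p, q, hsep⟩ := exists_forall_mem_closedBall_mul_add_mul_neg hs hs' hc hPQ
  have hu1 : ‖u • s'‖ < 1 := by rwa [norm_smul, hs', mul_one, Real.norm_eq_abs]
  have ht1 : ‖t • s‖ < 1 := by rwa [norm_smul, hs, mul_one, Real.norm_eq_abs]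
  have hus' : ⟪u • s', s'⟫_ℝ = u := by
    rw [real_inner_smul_left, real_inner_self_eq_norm_sq, hs', one_pow, mul_one]
  have hts : ⟪t • s, s⟫_ℝ = t := by
    rw [real_inner_smul_left, real_inner_self_eq_norm_sq, hs, one_pow, mul_one]
  have hpA : p * (⟪u • s', s⟫_ℝ - t) < 0 := by
    simpa [hus'] using hsep _ (mem_closedBall_zero_iff.mpr hu1.le)
  have hqB : q * (⟪t • s, s'⟫_ℝ - u) < 0 := by
    simpa [hts] using hsep _ (mem_closedBall_zero_iff.mpr ht1.le)
  have hp : p ≠ 0 := left_ne_zero_of_mul hpA.ne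
  have hq : q ≠ 0 := left_ne_zero_of_mul hqB.ne
  refine ⟨(decide (0 < p), decide (0 < q)), fun σ => ⟨?_, fun hσ => ?_⟩⟩
  · rintro ⟨x, ⟨h₁, h₂⟩, hx⟩ rfl
    dsimp only at h₁ h₂
    nlinarith [hsep x hx, mul_pos ((boolSign_mul_pos_iff hp).mpr rfl) h₁,
      mul_pos ((boolSign_mul_pos_iff hq).mpr rfl) h₂,
      boolSign_mul_mul_boolSign_mul (decide (0 < p)) p (⟪x, s⟫_ℝ - t),
      boolSign_mul_mul_boolSign_mul (decide (0 < q)) q (⟪x, s'⟫_ℝ - u)]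
  obtain h | h : σ.1 ≠ decide (0 < p) ∨ σ.2 ≠ decide (0 < q) := by
    by_contra! h
    exact hσ (Prod.ext h.1 h.2)
  · refine (wedge_inter_ball_nonempty_of_nonneg hs hs' hc ?_ (by simp [hus']) hu1).mono
      (inter_subset_inter_right _ ball_subset_closedBall)
    nlinarith [boolSign_mul_neg_of_ne hp h, boolSign_mul_mul_boolSign_mul σ.1 p (⟪u • s', s⟫_ℝ - t)]
  · refine (wedge_inter_ball_nonempty_of_nonneg hs hs' hc (by simp [hts]) ?_ ht1).mono
      (inter_subset_inter_right _ ball_subset_closedBall)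
    nlinarith [boolSign_mul_neg_of_ne hq h, boolSign_mul_mul_boolSign_mul σ.2 q (⟪t • s, s'⟫_ℝ - u)]

end Wedge

/-- let `P = {⟪x,s⟫ = t}` and `Q = {⟪x,s'⟫ = u}` be hyperplanes of ℝ^{n+1}
(`n ≥ 2`) with non-parallel unit normals, each meeting the open unit ball. If `P ∩ Q`
meets the open unit ball then `S^n \ (P ∪ Q)` has exactly 4 connected components; if
`P ∩ Q` is disjoint from the closed unit ball it has exactly 3. -/
theorem two_hyperplane_complement_components (n : ℕ) (hn : 2 ≤ n)
    (s s' : EuclideanSpace ℝ (Fin (n + 1))) (hs : ‖s‖ = 1) (hs' : ‖s'‖ = 1)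
    (t u : ℝ) (ht : |t| < 1) (hu : |u| < 1)
    (hnp : s' ≠ s) (hnp' : s' ≠ -s) :
    ((({x : EuclideanSpace ℝ (Fin (n + 1)) | ⟪x, s⟫_ℝ = t} ∩ {x | ⟪x, s'⟫_ℝ = u})
        ∩ Metric.ball (0 : EuclideanSpace ℝ (Fin (n + 1))) 1).Nonempty →
      Nat.card (ConnectedComponents
        {v : Metric.sphere (0 : EuclideanSpace ℝ (Fin (n + 1))) 1 //
          ⟪(v : EuclideanSpace ℝ (Fin (n + 1))), s⟫_ℝ ≠ t ∧
          ⟪(v : EuclideanSpace ℝ (Fin (n + 1))), s'⟫_ℝ ≠ u}) = 4) ∧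
    ((({x : EuclideanSpace ℝ (Fin (n + 1)) | ⟪x, s⟫_ℝ = t} ∩ {x | ⟪x, s'⟫_ℝ = u})
        ∩ Metric.closedBall (0 : EuclideanSpace ℝ (Fin (n + 1))) 1) = ∅ →
      Nat.card (ConnectedComponents
        {v : Metric.sphere (0 : EuclideanSpace ℝ (Fin (n + 1))) 1 //
          ⟪(v : EuclideanSpace ℝ (Fin (n + 1))), s⟫_ℝ ≠ t ∧
          ⟪(v : EuclideanSpace ℝ (Fin (n + 1))), s'⟫_ℝ ≠ u}) = 3) := by
  have hE : 3 ≤ Module.finrank ℝ (EuclideanSpace ℝ (Fin (n + 1))) := by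
    rw [finrank_euclideanSpace_fin]
    omega
  have hc := abs_real_inner_lt_one hs hs' hnp hnp'
  rw [card_connectedComponents_sphere_diff_eq hE hs hs' hc]
  refine ⟨fun ⟨x₀, ⟨hx₀s, hx₀s'⟩, hx₀⟩ => ?_, fun hPQ => ?_⟩
  · have hall (σ : Bool × Bool) : (wedge s t s' u σ ∩ closedBall 0 1).Nonempty :=
      (wedge_inter_ball_nonempty_of_nonneg hs hs' hc (by simp [show ⟪x₀, s⟫_ℝ = t from hx₀s])
        (by simp [show ⟪x₀, s'⟫_ℝ = u from hx₀s'])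
        (mem_ball_zero_iff.mp hx₀)).mono (inter_subset_inter_right _ ball_subset_closedBall)
    simp [hall]
  · obtain ⟨σ₀, hσ₀⟩ := exists_forall_wedge_inter_closedBall_nonempty_iff_ne hs hs' hc ht hu hPQ
    simp [hσ₀]
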